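/- Every WTAc over a commutative semiring S can be transformed into an equivalent constraint-determined WTAc, i.e. one in which no two productions differ only in their sets of equality and inequality constraints; the transformation preserves the properties positive and unambiguous. -/

import Mathlib

/-! Common framework: ranked trees, weighted tree grammars with constraints (WTGc). -/

/-- Unranked trees over a symbol type `α`; wellformedness w.r.t. an arity map
is imposed separately. -/
inductive RTree (α : Type) : Type
  | node : α → List (RTree α) → RTree α

namespace RTree

variable {α β : Type}

/-- The subtree of `t` at position `w` (positions are lists of child indices). -/
def subtreeAt : RTree α → List ℕ → Option (RTree α)
  | t, [] => some t
  | node _ ts, i :: w => (ts[i]?).bind fun c => subtreeAt c w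
termination_by t w => w.length

/-- Replace the subtree at position `w` by `s`. -/
def replaceAt : RTree α → List ℕ → RTree α → RTree α
  | _, [], s => s
  | node a ts, i :: w, s =>
      node a (ts.mapIdx fun j c => if j = i then replaceAt c w s else c)
termination_by t w s => w.length

/-- Relabeling of trees. -/
def map (f : α → β) : RTree α → RTree β
  | node a ts => node (f a) (ts.attach.map fun c => map f c.1)
termination_by t => sizeOf t
decreasing_by
  simp_wf
  have := List.sizeOf_lt_of_mem c.2
  omega

/-- The size of a tree: its number of positions. -/
def size : RTree α → ℕ
  | node _ ts => 1 + (ts.attach.map fun c => size c.1).sum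
termination_by t => sizeOf t
decreasing_by
  simp_wf
  have := List.sizeOf_lt_of_mem c.2
  omega

/-- The height of a tree: the maximal length of one of its positions. -/
def height : RTree α → ℕ
  | node _ ts => (ts.attach.map fun c => height c.1 + 1).foldr max 0
termination_by t => sizeOf t
decreasing_by
  simp_wf
  have := List.sizeOf_lt_of_mem c.2
  omega

/-- Wellformedness of a tree w.r.t. a ranked alphabet: the number of children of
every node equals the rank of its label. -/
inductive WF (ar : α → ℕ) : RTree α → Prop
  | node {a : α} {ts : List (RTree α)} :
      ts.length = ar a → (∀ t ∈ ts, WF ar t) → WF ar (node a ts)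

/-- Substitution of trees for the nonterminal-labelled (i.e. `Sum.inr`-labelled)
leaves: the leaf at absolute position `w` is replaced by `θ w`.  The second
argument is the position of the current subtree. -/
def substNT {Q : Type} (θ : List ℕ → RTree α) : RTree (α ⊕ Q) → List ℕ → RTree α
  | node (Sum.inr _) _, w => θ w
  | node (Sum.inl a) ts, w =>
      node a (ts.attach.mapIdx fun i c => substNT θ c.1 (w ++ [i]))
termination_by t _ => sizeOf t
decreasing_by
  simp_wf
  have := List.sizeOf_lt_of_mem c.2
  omega

/-- The list of pairs (position, nonterminal) of the nonterminal-labelled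
positions of a tree in `T_Σ(Q)`, in left-to-right order. -/
def ntPos {Q : Type} : RTree (α ⊕ Q) → List (List ℕ × Q)
  | node (Sum.inr q) _ => [([], q)]
  | node (Sum.inl _) ts =>
      (ts.attach.mapIdx fun i c => (ntPos c.1).map fun x => (i :: x.1, x.2)).flatten
termination_by t => sizeOf t
decreasing_by
  simp_wf
  have := List.sizeOf_lt_of_mem c.2
  omega

/-- Substitute the trees of the list `us` for the variables (`Sum.inr i` stands
for the variable `x_{i+1}`); variables without a corresponding list entry stay. -/
def substVL (us : List (RTree (β ⊕ ℕ))) : RTree (β ⊕ ℕ) → RTree (β ⊕ ℕ)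
  | node (Sum.inr i) ts => (us[i]?).getD (node (Sum.inr i) ts)
  | node (Sum.inl b) ts => node (Sum.inl b) (ts.attach.map fun c => substVL us c.1)
termination_by t => sizeOf t
decreasing_by
  simp_wf
  have := List.sizeOf_lt_of_mem c.2
  omega

/-- Application of the tree homomorphism induced by `h : α → T_β(X)`. -/
def applyHom (h : α → RTree (β ⊕ ℕ)) : RTree α → RTree (β ⊕ ℕ)
  | node a ts => substVL (ts.attach.map fun c => applyHom h c.1) (h a)
termination_by t => sizeOf t
decreasing_by
  simp_wf
  have := List.sizeOf_lt_of_mem c.2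
  omega

/-- A tree `t` satisfies the constraint `(v, v')` if both positions exist in `t`
and the corresponding subtrees are equal. -/
def satC (t : RTree α) (c : List ℕ × List ℕ) : Prop :=
  ∃ s, t.subtreeAt c.1 = some s ∧ t.subtreeAt c.2 = some s

end RTree

/-- The strict lexicographic order on positions in which proper prefixes are
*larger* than their extensions (and `ε` is the largest element). -/
inductive PosLt : List ℕ → List ℕ → Prop
  | ne_nil (i : ℕ) (w : List ℕ) : PosLt (i :: w) []
  | head {i j : ℕ} (v w : List ℕ) : i < j → PosLt (i :: v) (j :: w)
  | tail {i : ℕ} {v w : List ℕ} : PosLt v w → PosLt (i :: v) (i :: w)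

/-- A derivation (a list of production/position pairs) is left-most if its
positions are strictly increasing w.r.t. `PosLt`. -/
def Leftmost {P : Type} (d : List (P × List ℕ)) : Prop :=
  List.Chain' PosLt (d.map Prod.snd)

/-- The two-element Boolean semiring. -/
inductive B2 : Type
  | zero
  | one
  deriving DecidableEq

namespace B2

def add : B2 → B2 → B2
  | zero, x => x
  | one, _ => one

def mul : B2 → B2 → B2
  | zero, _ => zero
  | one, x => x

instance : Zero B2 := ⟨zero⟩
instance : One B2 := ⟨one⟩
instance : Add B2 := ⟨add⟩
instance : Mul B2 := ⟨mul⟩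

instance : CommSemiring B2 where
  add_assoc := fun a b c => by cases a <;> cases b <;> cases c <;> rfl
  zero_add := fun a => by cases a <;> rfl
  add_zero := fun a => by cases a <;> rfl
  add_comm := fun a b => by cases a <;> cases b <;> rfl
  mul_assoc := fun a b c => by cases a <;> cases b <;> cases c <;> rfl
  one_mul := fun a => by cases a <;> rfl
  mul_one := fun a => by cases a <;> rfl
  zero_mul := fun a => by cases a <;> rfl
  mul_zero := fun a => by cases a <;> rfl
  left_distrib := fun a b c => by cases a <;> cases b <;> cases c <;> rfl
  right_distrib := fun a b c => by cases a <;> cases b <;> cases c <;> rfl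
  mul_comm := fun a b => by cases a <;> cases b <;> rfl
  nsmul := nsmulRec
  npow := npowRec
  nsmul_zero := fun a => rfl
  nsmul_succ := fun n a => rfl
  npow_zero := fun a => rfl
  npow_succ := fun n a => rfl

end B2

/-- A weighted tree grammar with constraints (WTGc) over the commutative
semiring `S` and the ranked alphabet `(Γ, ar)`: finitely many nonterminals `Q`
with final weights, and finitely many productions `(lhs p, tgt p, eqc p, nec p)`
with weights, where the left-hand side is a wellformed tree over `Γ` and the
nonterminals that is not itself a nonterminal. -/
structure WTGc (S : Type) [CommSemiring S] (Γ : Type) (ar : Γ → ℕ) where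
  Q : Type
  P : Type
  finQ : Finite Q
  finP : Finite P
  final : Q → S
  lhs : P → RTree (Γ ⊕ Q)
  tgt : P → Q
  eqc : P → Finset (List ℕ × List ℕ)
  nec : P → Finset (List ℕ × List ℕ)
  wt : P → S
  lhs_wf : ∀ p, (lhs p).WF (Sum.elim ar fun _ => 0)
  lhs_ne : ∀ (p : P) (q : Q), lhs p ≠ RTree.node (Sum.inr q) []

namespace WTGc

variable {S : Type} [CommSemiring S] {Γ : Type} {ar : Γ → ℕ}

/-- A single derivation step of `G` on input tree `t`: at position `w` of the
sentential form `ξ` the left-hand side of production `p` is replaced by its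
target nonterminal, provided `t|_w` satisfies all equality constraints and
dissatisfies all inequality constraints of `p`. -/
def Step (G : WTGc S Γ ar) (t : RTree Γ) (ξ : RTree (Γ ⊕ G.Q)) (p : G.P)
    (w : List ℕ) (ζ : RTree (Γ ⊕ G.Q)) : Prop :=
  ξ.subtreeAt w = some (G.lhs p) ∧
  ζ = ξ.replaceAt w (RTree.node (Sum.inr (G.tgt p)) []) ∧
  ∃ s, t.subtreeAt w = some s ∧
    (∀ c ∈ G.eqc p, RTree.satC s c) ∧ (∀ c ∈ G.nec p, ¬ RTree.satC s c)

/-- `Derives G t ξ d ζ`: the sequence `d` of production/position pairs is a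
derivation of `G` for the input tree `t` from the sentential form `ξ` to `ζ`. -/
inductive Derives (G : WTGc S Γ ar) (t : RTree Γ) :
    RTree (Γ ⊕ G.Q) → List (G.P × List ℕ) → RTree (Γ ⊕ G.Q) → Prop
  | refl (ξ : RTree (Γ ⊕ G.Q)) : Derives G t ξ [] ξ
  | step {ξ ζ η : RTree (Γ ⊕ G.Q)} {p : G.P} {w : List ℕ} {d : List (G.P × List ℕ)} :
      G.Step t ξ p w ζ → Derives G t ζ d η → Derives G t ξ ((p, w) :: d) η

/-- `D G q t` : the set of complete left-most derivations of `G` for `t` to `q`. -/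
def D (G : WTGc S Γ ar) (q : G.Q) (t : RTree Γ) : Set (List (G.P × List ℕ)) :=
  {d | Derives G t (t.map Sum.inl) d (RTree.node (Sum.inr q) []) ∧ Leftmost d}

/-- The weight of a derivation: the product of the weights of its productions. -/
def wtD (G : WTGc S Γ ar) (d : List (G.P × List ℕ)) : S :=
  (d.map fun x => G.wt x.1).prod

/-- The weight of `t` at nonterminal `q`: the sum of the weights of all
complete left-most derivations of `G` for `t` to `q`. -/
noncomputable def qWeight (G : WTGc S Γ ar) (q : G.Q) (t : RTree Γ) : S :=
  ∑ᶠ d ∈ G.D q t, G.wtD d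

/-- The weighted tree language generated by `G`. -/
noncomputable def weight (G : WTGc S Γ ar) (t : RTree Γ) : S :=
  ∑ᶠ q : G.Q, G.final q * G.qWeight q t

/-- The support of `G`. -/
def supp (G : WTGc S Γ ar) : Set (RTree Γ) := {t | G.weight t ≠ 0}

/-- Two WTGc are equivalent if they generate the same weighted tree language. -/
def Equivalent (G G' : WTGc S Γ ar) : Prop := ∀ t, G.weight t = G'.weight t

/-- A production is normalized if its left-hand side is of the form
`σ(q_1, …, q_k)` with nonterminals `q_i`. -/
def NormalizedProd (G : WTGc S Γ ar) (p : G.P) : Prop :=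
  ∃ (σ : Γ) (qs : List G.Q),
    G.lhs p = RTree.node (Sum.inl σ) (qs.map fun q => RTree.node (Sum.inr q) [])

/-- A WTGc is a WTAc if all its productions are normalized. -/
def IsWTAc (G : WTGc S Γ ar) : Prop := ∀ p, G.NormalizedProd p

/-- A WTGc is positive if no production has inequality constraints. -/
def Positive (G : WTGc S Γ ar) : Prop := ∀ p, G.nec p = ∅

/-- A WTGc is unconstrained (a WTG) if no production has any constraints. -/
def Unconstrained (G : WTGc S Γ ar) : Prop := ∀ p, G.eqc p = ∅ ∧ G.nec p = ∅

/-- A weighted tree automaton: normalized and unconstrained. -/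
def IsWTA (G : WTGc S Γ ar) : Prop := G.IsWTAc ∧ G.Unconstrained

/-- Position `w` of `ℓ` is labelled by the nonterminal `q`. -/
def ntLabelAt {Q : Type} (ℓ : RTree (Γ ⊕ Q)) (w : List ℕ) (q : Q) : Prop :=
  ℓ.subtreeAt w = some (RTree.node (Sum.inr q) [])

/-- Position `w` of `ℓ` is a nonterminal-labelled position. -/
def IsNTpos {Q : Type} (ℓ : RTree (Γ ⊕ Q)) (w : List ℕ) : Prop :=
  ∃ q : Q, ntLabelAt ℓ w q

/-- A WTGc is classic if all constrained positions of all productions are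
nonterminal-labelled positions of the respective left-hand side. -/
def Classic (G : WTGc S Γ ar) : Prop :=
  ∀ p, ∀ c ∈ G.eqc p ∪ G.nec p, IsNTpos (G.lhs p) c.1 ∧ IsNTpos (G.lhs p) c.2

/-- Boolean final weights. -/
def BooleanFinal (G : WTGc S Γ ar) : Prop := ∀ q, G.final q = 0 ∨ G.final q = 1

/-- Unambiguous: every tree has at most one complete left-most derivation to a
nonterminal with non-zero final weight. -/
def Unambiguous (G : WTGc S Γ ar) : Prop :=
  ∀ (t : RTree Γ) (q q' : G.Q) (d d' : List (G.P × List ℕ)),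
    G.final q ≠ 0 → G.final q' ≠ 0 → d ∈ G.D q t → d' ∈ G.D q' t → q = q' ∧ d = d'

/-- Constraint-determined: two productions never differ only in their
constraint sets. -/
def ConstraintDetermined (G : WTGc S Γ ar) : Prop :=
  ∀ p p' : G.P, G.lhs p = G.lhs p' → G.tgt p = G.tgt p' →
    G.eqc p = G.eqc p' ∧ G.nec p = G.nec p'

/-- `bot` is a sink nonterminal of `G`. -/
def SinkNT (G : WTGc S Γ ar) (bot : G.Q) : Prop :=
  G.final bot = 0 ∧
  (∀ p, G.tgt p = bot →
    G.wt p = 1 ∧ G.eqc p = ∅ ∧ G.nec p = ∅ ∧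
    ∃ σ : Γ, G.lhs p =
      RTree.node (Sum.inl σ) (List.replicate (ar σ) (RTree.node (Sum.inr bot) []))) ∧
  (∀ σ : Γ, ∃ p, G.tgt p = bot ∧ G.lhs p =
      RTree.node (Sum.inl σ) (List.replicate (ar σ) (RTree.node (Sum.inr bot) [])))

/-- The equivalence on positions generated by a set of equality constraints. -/
inductive CEqv (E : Finset (List ℕ × List ℕ)) : List ℕ → List ℕ → Prop
  | base {v v' : List ℕ} : (v, v') ∈ E → CEqv E v v'
  | refl (v : List ℕ) : CEqv E v v
  | symm {v v' : List ℕ} : CEqv E v v' → CEqv E v' v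
  | trans {u v w : List ℕ} : CEqv E u v → CEqv E v w → CEqv E u w

/-- Eq-restricted (Definition 3.2): a positive classic WTGc with a sink
nonterminal `bot` such that within every equivalence class of constrained
nonterminal positions of a left-hand side all nonterminals are `bot` except
for exactly one governing position. -/
def EqRestricted (G : WTGc S Γ ar) (bot : G.Q) : Prop :=
  G.SinkNT bot ∧ G.Classic ∧ G.Positive ∧
  ∀ (p : G.P) (w : List ℕ) (q : G.Q), ntLabelAt (G.lhs p) w q →
    ∃ q' : G.Q,
      (∀ (w' : List ℕ) (q'' : G.Q), CEqv (G.eqc p) w w' →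
          ntLabelAt (G.lhs p) w' q'' → q'' = q' ∨ q'' = bot) ∧
      (∃! w' : List ℕ, CEqv (G.eqc p) w w' ∧ ntLabelAt (G.lhs p) w' q')

end WTGc

/-- A tree homomorphism from `(Γ, arΓ)` to `(Δ, arΔ)`, given by its defining
map: `hmap a ∈ T_Δ(X_{arΓ a})`, where `Sum.inr i` represents the variable
`x_{i+1}`. -/
structure TreeHom (Γ : Type) (arΓ : Γ → ℕ) (Δ : Type) (arΔ : Δ → ℕ) where
  hmap : Γ → RTree (Δ ⊕ ℕ)
  hmap_wf : ∀ a, (hmap a).WF (Sum.elim arΔ fun _ => 0)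
  hmap_var : ∀ (a : Γ) (i : ℕ) (w : List ℕ),
    (hmap a).subtreeAt w = some (RTree.node (Sum.inr i) []) → i < arΓ a

namespace TreeHom

variable {Γ Δ : Type} {arΓ : Γ → ℕ} {arΔ : Δ → ℕ}

/-- Nondeleting: every variable occurs in the defining tree. -/
def Nondeleting (h : TreeHom Γ arΓ Δ arΔ) : Prop :=
  ∀ (a : Γ), ∀ i < arΓ a, ∃ w : List ℕ,
    (h.hmap a).subtreeAt w = some (RTree.node (Sum.inr i) [])

/-- Nonerasing: no defining tree is a variable. -/
def Nonerasing (h : TreeHom Γ arΓ Δ arΔ) : Prop :=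
  ∀ a : Γ, ∃ (δ : Δ) (ts : List (RTree (Δ ⊕ ℕ))), h.hmap a = RTree.node (Sum.inl δ) ts

/-- Application of the induced tree homomorphism. -/
def apply (h : TreeHom Γ arΓ Δ arΔ) : RTree Γ → RTree (Δ ⊕ ℕ) :=
  RTree.applyHom h.hmap

/-- The preimage of `u ∈ T_Δ` under the induced tree homomorphism. -/
def preimage (h : TreeHom Γ arΓ Δ arΔ) (u : RTree Δ) : Set (RTree Γ) :=
  {t | t.WF arΓ ∧ h.apply t = u.map Sum.inl}

/-- The image `h(A)` of a weighted tree language `A` under `h`. -/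
noncomputable def image {S : Type} [CommSemiring S] (h : TreeHom Γ arΓ Δ arΔ)
    (A : RTree Γ → S) (u : RTree Δ) : S :=
  ∑ᶠ t ∈ h.preimage u, A t

end TreeHom

/-! Split every nonterminal `q` of `G` into the pairs `(q, p)`, where `p` is the production that
derived it. A production `p` annotated in this way has target `(tgt p, p)`, so its target
determines its constraints. Forgetting the annotations is a `Cover`: every derivation of `G` lifts
uniquely, so the derivations of the refined automaton to the nonterminals `(q, _)` correspond,
with equal weights, to the derivations of `G` to `q`; this yields equivalence and transfers
unambiguity. -/

namespace RTree

variable {α β γ δ : Type}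

@[induction_eliminator]
theorem induction {motive : RTree α → Prop}
    (node : ∀ a ts, (∀ c ∈ ts, motive c) → motive (.node a ts)) (t : RTree α) : motive t :=
  match t with
  | .node a ts => node a ts fun c _ => induction node c
termination_by sizeOf t
decreasing_by
  have := List.sizeOf_lt_of_mem ‹c ∈ ts›
  simp_wf
  omega

@[simp]
theorem map_node (g : α → β) (a : α) (ts : List (RTree α)) :
    (node a ts).map g = node (g a) (ts.map (map g)) := by
  rw [map, List.map_attach_eq_pmap, List.pmap_eq_map]

theorem subtreeAt_map (g : α → β) (t : RTree α) (w : List ℕ) :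
    (t.map g).subtreeAt w = (t.subtreeAt w).map (map g) := by
  induction w generalizing t with
  | nil => simp [subtreeAt]
  | cons i w ih =>
    obtain ⟨a, ts⟩ := t
    rw [map_node, subtreeAt, subtreeAt, List.getElem?_map]
    cases ts[i]? <;> simp [ih]

theorem map_replaceAt (g : α → β) (t : RTree α) (w : List ℕ) (s : RTree α) :
    (t.replaceAt w s).map g = (t.map g).replaceAt w (s.map g) := by
  induction w generalizing t with
  | nil => simp [replaceAt]
  | cons i w ih =>
    obtain ⟨a, ts⟩ := t
    rw [replaceAt, map_node, map_node, replaceAt]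
    congr 1
    apply List.ext_getElem (by simp)
    intro j _ _
    simp only [List.getElem_map, List.getElem_mapIdx]
    split <;> simp [ih]

theorem map_map (g : β → γ) (f : α → β) (t : RTree α) : (t.map f).map g = t.map (g ∘ f) := by
  induction t with
  | node a ts ih =>
    simp only [map_node, List.map_map, Function.comp_apply]
    exact congrArg _ (List.map_congr_left ih)

theorem map_sumMap_map_inl (f : β → γ) (t : RTree α) :
    (t.map Sum.inl).map (Sum.map id f) = t.map Sum.inl := by
  rw [map_map]
  rfl

theorem exists_eq_node_of_map_eq_node {g : α → β} {t : RTree α} {b : β} {us : List (RTree β)}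
    (h : t.map g = node b us) : ∃ a ts, t = node a ts ∧ g a = b ∧ ts.map (map g) = us := by
  obtain ⟨a, ts⟩ := t
  rw [map_node, node.injEq] at h
  exact ⟨a, ts, rfl, h⟩

theorem exists_eq_leaf_of_map_eq_leaf {f : α → γ} {g : β → δ} {t : RTree (α ⊕ β)} {y : δ}
    (h : t.map (Sum.map f g) = node (Sum.inr y) []) : ∃ x, g x = y ∧ t = node (Sum.inr x) [] := by
  obtain ⟨a, ts, rfl, ha, hts⟩ := exists_eq_node_of_map_eq_node h
  obtain rfl : ts = [] := List.map_eq_nil_iff.1 hts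
  cases a with
  | inl a => simp at ha
  | inr x => exact ⟨x, Sum.inr_injective ha, rfl⟩

theorem exists_eq_node_leaves_of_map_eq {f : β → γ} {t : RTree (α ⊕ β)} {a : α} {ys : List γ}
    (h : t.map (Sum.map id f) = node (Sum.inl a) (ys.map fun y => node (Sum.inr y) [])) :
    ∃ xs : List β, xs.map f = ys ∧ t = node (Sum.inl a) (xs.map fun x => node (Sum.inr x) []) := by
  obtain ⟨b, ts, rfl, hb, hts⟩ := exists_eq_node_of_map_eq_node h
  obtain ⟨a, rfl⟩ : ∃ a', b = Sum.inl a' := by cases b <;> simp_all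
  obtain rfl : a = _ := Sum.inl_injective hb
  suffices ∃ xs : List β, xs.map f = ys ∧ ts = xs.map fun x => node (Sum.inr x) [] by
    simpa using this
  clear h hb
  induction ts generalizing ys with
  | nil => exact ⟨[], by simp_all⟩
  | cons t ts ih =>
    obtain _ | ⟨y, ys⟩ := ys
    · simp at hts
    obtain ⟨hhead, htail⟩ := List.cons.inj hts
    obtain ⟨x, rfl, rfl⟩ := exists_eq_leaf_of_map_eq_leaf hhead
    obtain ⟨xs, rfl, rfl⟩ := ih htail
    exact ⟨x :: xs, rfl, rfl⟩

theorem finite_setOf_isSome_subtreeAt (t : RTree α) : {w | (t.subtreeAt w).isSome}.Finite := by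
  induction t with
  | node a ts ih =>
    refine (((List.finite_toSet ts).biUnion fun c hc =>
      (Set.finite_Iio ts.length).biUnion fun i _ => (ih c hc).image (i :: ·)).insert []).subset ?_
    rintro (_ | ⟨i, w⟩) hw
    · exact Set.mem_insert _ _
    rw [Set.mem_ofPred_eq, subtreeAt] at hw
    rcases hc : ts[i]? with _ | c
    · simp [hc] at hw
    rw [hc, Option.bind_some] at hw
    obtain ⟨hi, rfl⟩ := List.getElem?_eq_some_iff.1 hc
    exact Or.inr (Set.mem_biUnion (List.getElem_mem hi) (Set.mem_biUnion hi ⟨w, hw, rfl⟩))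

end RTree

theorem PosLt.irrefl : ∀ v : List ℕ, ¬ PosLt v v
  | [], h => nomatch h
  | _ :: _, .head _ _ h => Nat.lt_irrefl _ h
  | _ :: v, .tail h => PosLt.irrefl v h

theorem PosLt.trans {u v w : List ℕ} (h₁ : PosLt u v) (h₂ : PosLt v w) : PosLt u w := by
  induction h₁ generalizing w with
  | ne_nil => cases h₂
  | head _ _ hij =>
    cases h₂ with
    | ne_nil => exact .ne_nil _ _
    | head _ _ h => exact .head _ _ (hij.trans h)
    | tail => exact .head _ _ hij
  | tail _ ih =>
    cases h₂ with
    | ne_nil => exact .ne_nil _ _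
    | head _ _ h => exact .head _ _ h
    | tail h => exact .tail (ih h)

instance : IsStrictOrder (List ℕ) PosLt where
  irrefl := PosLt.irrefl
  trans _ _ _ := PosLt.trans

theorem Leftmost.nodup {P : Type} {d : List (P × List ℕ)} (h : Leftmost d) : d.Nodup :=
  (List.isChain_iff_pairwise.1 h).nodup.of_map _

theorem List.finite_setOf_nodup_forall_mem {α : Type} {s : Set α} (hs : s.Finite) :
    {l : List α | l.Nodup ∧ ∀ x ∈ l, x ∈ s}.Finite := by
  have := hs.fintype
  refine ((List.finite_length_le s (Fintype.card s)).image (List.map Subtype.val)).subset ?_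
  rintro l ⟨hnd, hl⟩
  lift l to List s using hl
  exact ⟨l, (hnd.of_map _).length_le_card, rfl⟩

namespace WTGc

variable {S : Type} [CommSemiring S] {Γ : Type} {ar : Γ → ℕ}

section Derivations

variable {G : WTGc S Γ ar} {t : RTree Γ}

theorem Derives.isSome_subtreeAt {ξ η : RTree (Γ ⊕ G.Q)} {d : List (G.P × List ℕ)}
    (h : G.Derives t ξ d η) : ∀ x ∈ d, (t.subtreeAt x.2).isSome := by
  induction h with
  | refl => simp
  | step hs _ ih =>
    obtain ⟨-, -, s, hs, -⟩ := hs
    simpa [hs] using ih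

theorem Derives.target_unique {ξ η₁ η₂ : RTree (Γ ⊕ G.Q)} {d : List (G.P × List ℕ)}
    (h₁ : G.Derives t ξ d η₁) (h₂ : G.Derives t ξ d η₂) : η₁ = η₂ := by
  induction h₁ generalizing η₂ with
  | refl => cases h₂; rfl
  | step hs _ ih =>
    obtain _ | ⟨hs', hd'⟩ := h₂
    exact ih (hs.2.1 ▸ hs'.2.1 ▸ hd')

end Derivations

theorem finite_D (G : WTGc S Γ ar) (q : G.Q) (t : RTree Γ) : (G.D q t).Finite := by
  have := G.finP
  refine (List.finite_setOf_nodup_forall_mem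
    (Set.finite_univ.prod t.finite_setOf_isSome_subtreeAt)).subset ?_
  rintro d ⟨hder, hlm⟩
  exact ⟨hlm.nodup, fun x hx => ⟨trivial, hder.isSome_subtreeAt x hx⟩⟩

theorem weight_eq_sum_sigma (G : WTGc S Γ ar) [Fintype G.Q] (t : RTree Γ) :
    G.weight t = ∑ x ∈ Finset.univ.sigma fun q => (G.finite_D q t).toFinset,
      G.final x.1 * G.wtD x.2 := by
  rw [weight, finsum_eq_sum_of_fintype, Finset.sum_sigma]
  refine Finset.sum_congr rfl fun q _ => ?_
  rw [qWeight, finsum_mem_eq_finite_toFinset_sum _ (G.finite_D q t), Finset.mul_sum]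

structure Cover (G' G : WTGc S Γ ar) where
  mapQ : G'.Q → G.Q
  mapP : G'.P → G.P
  final_eq : ∀ q, G'.final q = G.final (mapQ q)
  lhs_map : ∀ p, (G'.lhs p).map (Sum.map id mapQ) = G.lhs (mapP p)
  tgt_eq : ∀ p, mapQ (G'.tgt p) = G.tgt (mapP p)
  eqc_eq : ∀ p, G'.eqc p = G.eqc (mapP p)
  nec_eq : ∀ p, G'.nec p = G.nec (mapP p)
  wt_eq : ∀ p, G'.wt p = G.wt (mapP p)
  exists_lift : ∀ p (ℓ : RTree (Γ ⊕ G'.Q)), ℓ.map (Sum.map id mapQ) = G.lhs p →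
    ∃ p', mapP p' = p ∧ G'.lhs p' = ℓ
  lift_unique : ∀ p₁ p₂, mapP p₁ = mapP p₂ → G'.lhs p₁ = G'.lhs p₂ → p₁ = p₂

namespace Cover

open RTree

variable {G' G : WTGc S Γ ar} (C : Cover G' G) {t : RTree Γ}

def mapDeriv (d : List (G'.P × List ℕ)) : List (G.P × List ℕ) := d.map (Prod.map C.mapP id)

theorem step_map {ξ ζ : RTree (Γ ⊕ G'.Q)} {p : G'.P} {w : List ℕ} (h : G'.Step t ξ p w ζ) :
    G.Step t (ξ.map (Sum.map id C.mapQ)) (C.mapP p) w (ζ.map (Sum.map id C.mapQ)) := by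
  obtain ⟨hsub, rfl, s, hs, heq, hne⟩ := h
  refine ⟨?_, ?_, s, hs, by rwa [← C.eqc_eq], by rwa [← C.nec_eq]⟩
  · rw [subtreeAt_map, hsub, Option.map_some, C.lhs_map]
  · simp [map_replaceAt, C.tgt_eq]

theorem derives_map {ξ η : RTree (Γ ⊕ G'.Q)} {d : List (G'.P × List ℕ)}
    (h : G'.Derives t ξ d η) :
    G.Derives t (ξ.map (Sum.map id C.mapQ)) (C.mapDeriv d) (η.map (Sum.map id C.mapQ)) := by
  induction h with
  | refl => exact .refl _
  | step hs _ ih => exact .step (C.step_map hs) ih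

theorem exists_step_lift {ξ ζ : RTree (Γ ⊕ G.Q)} {p : G.P} {w : List ℕ} (h : G.Step t ξ p w ζ)
    {ξ' : RTree (Γ ⊕ G'.Q)} (hξ : ξ'.map (Sum.map id C.mapQ) = ξ) :
    ∃ p' ζ', C.mapP p' = p ∧ G'.Step t ξ' p' w ζ' ∧ ζ'.map (Sum.map id C.mapQ) = ζ := by
  obtain ⟨hsub, rfl, s, hs, heq, hne⟩ := h
  rw [← hξ, subtreeAt_map, Option.map_eq_some_iff] at hsub
  obtain ⟨ℓ, hℓ, hℓp⟩ := hsub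
  obtain ⟨p', rfl, rfl⟩ := C.exists_lift p ℓ hℓp
  refine ⟨p', _, rfl, ⟨hℓ, rfl, s, hs, by rwa [C.eqc_eq], by rwa [C.nec_eq]⟩, ?_⟩
  simp [map_replaceAt, hξ, C.tgt_eq]

theorem exists_derives_lift {ξ η : RTree (Γ ⊕ G.Q)} {d : List (G.P × List ℕ)}
    (h : G.Derives t ξ d η) {ξ' : RTree (Γ ⊕ G'.Q)} (hξ : ξ'.map (Sum.map id C.mapQ) = ξ) :
    ∃ d' η', G'.Derives t ξ' d' η' ∧ C.mapDeriv d' = d ∧ η'.map (Sum.map id C.mapQ) = η := by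
  induction h generalizing ξ' with
  | refl => exact ⟨[], ξ', .refl _, rfl, hξ⟩
  | step hs _ ih =>
    obtain ⟨p', ζ', rfl, hs', hζ⟩ := C.exists_step_lift hs hξ
    obtain ⟨d', η', hd', rfl, hη⟩ := ih hζ
    exact ⟨_, η', .step hs' hd', rfl, hη⟩

theorem eq_of_mapDeriv_eq {ξ η₁ η₂ : RTree (Γ ⊕ G'.Q)} {d₁ d₂ : List (G'.P × List ℕ)}
    (h₁ : G'.Derives t ξ d₁ η₁) (h₂ : G'.Derives t ξ d₂ η₂)
    (h : C.mapDeriv d₁ = C.mapDeriv d₂) : d₁ = d₂ := by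
  induction h₁ generalizing d₂ η₂ with
  | refl => cases h₂ <;> simp_all [mapDeriv]
  | step hs _ ih =>
    obtain _ | ⟨hs₂, hd₂⟩ := h₂
    · simp [mapDeriv] at h
    simp only [mapDeriv, List.map_cons, Prod.map, id, List.cons.injEq, Prod.mk.injEq] at h
    obtain ⟨⟨hp, rfl⟩, h⟩ := h
    obtain rfl := C.lift_unique _ _ hp (Option.some_inj.1 (hs.1.symm.trans hs₂.1))
    rw [ih (hs.2.1 ▸ hs₂.2.1 ▸ hd₂) h]

theorem map_snd_mapDeriv (d : List (G'.P × List ℕ)) :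
    (C.mapDeriv d).map Prod.snd = d.map Prod.snd := by
  simp [mapDeriv]

theorem mapDeriv_mem_D {q : G'.Q} {d : List (G'.P × List ℕ)} (h : d ∈ G'.D q t) :
    C.mapDeriv d ∈ G.D (C.mapQ q) t := by
  have hder := C.derives_map h.1
  rw [map_sumMap_map_inl] at hder
  exact ⟨by simpa using hder, by rw [Leftmost, map_snd_mapDeriv]; exact h.2⟩

theorem exists_mem_D_lift {q : G.Q} {d : List (G.P × List ℕ)} (h : d ∈ G.D q t) :
    ∃ q' d', C.mapQ q' = q ∧ d' ∈ G'.D q' t ∧ C.mapDeriv d' = d := by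
  obtain ⟨d', η', hd', rfl, hη⟩ := C.exists_derives_lift h.1 (ξ' := t.map Sum.inl)
    (map_sumMap_map_inl _ t)
  obtain ⟨q', rfl, rfl⟩ := exists_eq_leaf_of_map_eq_leaf hη
  exact ⟨q', d', rfl, ⟨hd', by rw [Leftmost, ← C.map_snd_mapDeriv]; exact h.2⟩, rfl⟩

theorem wtD_mapDeriv (d : List (G'.P × List ℕ)) : G.wtD (C.mapDeriv d) = G'.wtD d := by
  simp [wtD, mapDeriv, C.wt_eq, Function.comp_def]

theorem equivalent (C : Cover G' G) : G.Equivalent G' := by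
  intro t
  have := G.finQ
  have := G'.finQ
  have := Fintype.ofFinite G.Q
  have := Fintype.ofFinite G'.Q
  rw [weight_eq_sum_sigma, weight_eq_sum_sigma]
  symm
  refine Finset.sum_bij (fun x _ => ⟨C.mapQ x.1, C.mapDeriv x.2⟩) ?_ ?_ ?_ ?_
  · intro x hx
    simp only [Finset.mem_sigma, Finset.mem_univ, Set.Finite.mem_toFinset, true_and] at hx ⊢
    exact C.mapDeriv_mem_D hx
  · rintro ⟨q₁, d₁⟩ hx₁ ⟨q₂, d₂⟩ hx₂ h
    simp only [Finset.mem_sigma, Finset.mem_univ, Set.Finite.mem_toFinset, true_and] at hx₁ hx₂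
    simp only [Sigma.mk.injEq, heq_eq_eq] at h
    obtain rfl := C.eq_of_mapDeriv_eq hx₁.1 hx₂.1 h.2
    cases hx₁.1.target_unique hx₂.1
    rfl
  · rintro ⟨q, d⟩ hx
    simp only [Finset.mem_sigma, Finset.mem_univ, Set.Finite.mem_toFinset, true_and] at hx
    obtain ⟨q', d', rfl, hd', rfl⟩ := C.exists_mem_D_lift hx
    exact ⟨⟨q', d'⟩, by simpa using hd', rfl⟩
  · intro x _
    rw [C.final_eq, C.wtD_mapDeriv]

theorem positive (C : Cover G' G) (hG : G.Positive) : G'.Positive :=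
  fun p => (C.nec_eq p).trans (hG _)

theorem unambiguous (C : Cover G' G) (hG : G.Unambiguous) : G'.Unambiguous := by
  intro t q₁ q₂ d₁ d₂ hf₁ hf₂ hd₁ hd₂
  rw [C.final_eq] at hf₁ hf₂
  have hd := (hG t _ _ _ _ hf₁ hf₂ (C.mapDeriv_mem_D hd₁) (C.mapDeriv_mem_D hd₂)).2
  obtain rfl := C.eq_of_mapDeriv_eq hd₁.1 hd₂.1 hd
  cases hd₁.1.target_unique hd₂.1
  exact ⟨rfl, rfl⟩

end Cover

section Annotation

open RTree

variable (G : WTGc S Γ ar) (hG : G.IsWTAc)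

noncomputable def lhsSymbol (p : G.P) : Γ := (hG p).choose

noncomputable def lhsArgs (p : G.P) : List G.Q := (hG p).choose_spec.choose

theorem lhs_eq_lhsSymbol_lhsArgs (p : G.P) :
    G.lhs p = node (Sum.inl (G.lhsSymbol hG p))
      ((G.lhsArgs hG p).map fun q => node (Sum.inr q) []) :=
  (hG p).choose_spec.choose_spec

theorem length_lhsArgs (p : G.P) : (G.lhsArgs hG p).length = ar (G.lhsSymbol hG p) := by
  have h := G.lhs_wf p
  rw [lhs_eq_lhsSymbol_lhsArgs] at h
  obtain ⟨h, -⟩ := h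
  simpa using h

/-- A production `p` of `G` together with, for each nonterminal `q` of its left-hand side,
the production `r` that derived it, recorded as the pair `(q, r)`. -/
def AnnotatedProd : Type :=
  Σ p : G.P, {l : List (G.Q × G.P) // l.map Prod.fst = G.lhsArgs hG p}

instance : Finite (G.AnnotatedProd hG) := by
  have := G.finP
  have := G.finQ
  have (p : G.P) : Finite {l : List (G.Q × G.P) // l.map Prod.fst = G.lhsArgs hG p} :=
    ((List.finite_length_eq _ (G.lhsArgs hG p).length).subset fun l (hl : _ = _) =>
      by simp [← hl]).to_subtype
  unfold AnnotatedProd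
  infer_instance

noncomputable def annotated : WTGc S Γ ar where
  Q := G.Q × G.P
  P := G.AnnotatedProd hG
  finQ := by have := G.finP; have := G.finQ; infer_instance
  finP := inferInstance
  final q := G.final q.1
  lhs x := node (Sum.inl (G.lhsSymbol hG x.1)) (x.2.1.map fun q => node (Sum.inr q) [])
  tgt x := (G.tgt x.1, x.1)
  eqc x := G.eqc x.1
  nec x := G.nec x.1
  wt x := G.wt x.1
  lhs_wf x := by
    refine .node ?_ ?_
    · simp [← G.length_lhsArgs hG x.1, ← x.2.2]
    · simp only [List.mem_map]
      rintro _ ⟨q, -, rfl⟩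
      exact .node rfl (by simp)
  lhs_ne _ _ h := by simp at h

theorem isWTAc_annotated : (G.annotated hG).IsWTAc := fun x => ⟨_, x.2.1, rfl⟩

theorem constraintDetermined_annotated : (G.annotated hG).ConstraintDetermined := by
  rintro x x' - htgt
  have hp : x.1 = x'.1 := congrArg Prod.snd htgt
  exact ⟨congrArg G.eqc hp, congrArg G.nec hp⟩

noncomputable def annotatedCover : Cover (G.annotated hG) G where
  mapQ := Prod.fst
  mapP := Sigma.fst
  final_eq _ := rfl
  lhs_map x := by
    simp [annotated, G.lhs_eq_lhsSymbol_lhsArgs hG x.1, ← x.2.2, Function.comp_def]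
  tgt_eq _ := rfl
  eqc_eq _ := rfl
  nec_eq _ := rfl
  wt_eq _ := rfl
  exists_lift p ℓ h := by
    rw [G.lhs_eq_lhsSymbol_lhsArgs hG p] at h
    obtain ⟨l, hl, rfl⟩ := exists_eq_node_leaves_of_map_eq h
    exact ⟨⟨p, l, hl⟩, rfl, rfl⟩
  lift_unique := by
    rintro ⟨p, l₁, h₁⟩ ⟨_, l₂, h₂⟩ (rfl : p = _) h
    simp only [annotated, node.injEq, true_and] at h
    obtain rfl := List.map_injective_iff.2 (fun _ _ h => by simpa using h) h
    rfl

end Annotation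

end WTGc

theorem stmt6_general {S : Type} [CommSemiring S] {Γ : Type} {ar : Γ → ℕ}
    (G : WTGc S Γ ar) (hG : G.IsWTAc) :
    ∃ G' : WTGc S Γ ar, G'.IsWTAc ∧ G'.ConstraintDetermined ∧ G.Equivalent G' ∧
      (G.Positive → G'.Positive) ∧ (G.Unambiguous → G'.Unambiguous) :=
  let C := G.annotatedCover hG
  ⟨G.annotated hG, G.isWTAc_annotated hG, G.constraintDetermined_annotated hG, C.equivalent,
    C.positive, C.unambiguous⟩

/-- every WTAc can be transformed into an equivalent
constraint-determined WTAc, preserving positivity and unambiguity. -/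
theorem stmt6 {S : Type} [CommSemiring S] {Γ : Type} [Finite Γ] {ar : Γ → ℕ}
    (G : WTGc S Γ ar) (hG : G.IsWTAc) :
    ∃ G' : WTGc S Γ ar, G'.IsWTAc ∧ G'.ConstraintDetermined ∧ G.Equivalent G' ∧
      (G.Positive → G'.Positive) ∧ (G.Unambiguous → G'.Unambiguous) :=
  stmt6_general G hG
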